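/- For n > 2, the unique Fishburn permutation of size n avoiding the classical pattern 213 whose last entry is n is the identity permutation 12⋯n. -/
import Mathlib


open Finset

/-- The list of values of a permutation of `Fin n` (0-based values). -/
def permList {n : ℕ} (π : Equiv.Perm (Fin n)) : List ℕ :=
  (List.finRange n).map fun i => (π i : ℕ)

/-- A sequence `w` of distinct integers contains the classical pattern `p`:
some subsequence of `w` is order-isomorphic to `p`. -/
def SeqContains (w p : List ℕ) : Prop :=
  ∃ f : Fin p.length → Fin w.length, StrictMono f ∧
    ∀ i j : Fin p.length, p.get i < p.get j ↔ w.get (f i) < w.get (f j)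

/-- A permutation avoids a classical pattern (given as the list of its values). -/
def AvoidsPat {n : ℕ} (π : Equiv.Perm (Fin n)) (p : List ℕ) : Prop :=
  ¬ SeqContains (permList π) p

/-- `π` is a Fishburn permutation: it avoids the bivincular pattern (231,{1},{1}),
i.e. there are no positions `i < k` with `π i = π k + 1` and `π i < π (i+1)`
(0-based values, so `π i = π k + 1` encodes `π(i) > 1` and `π(k) = π(i) - 1`). -/
def IsFishburn {n : ℕ} (π : Equiv.Perm (Fin n)) : Prop :=
  ∀ i k : ℕ, ∀ hi : i < n, ∀ hk : k < n, ∀ _hik : i < k,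
    (π ⟨i, hi⟩ : ℕ) = (π ⟨k, hk⟩ : ℕ) + 1 →
    ¬ ((π ⟨i, hi⟩ : ℕ) < (π ⟨i + 1, by omega⟩ : ℕ))

/-- A permutation is indecomposable if it is not the direct sum of two nonempty
permutations, i.e. no proper nonempty initial segment of positions maps onto the
corresponding initial segment of values. -/
def IsIndecomposable {n : ℕ} (π : Equiv.Perm (Fin n)) : Prop :=
  ¬ ∃ k : ℕ, 0 < k ∧ k < n ∧ ∀ i : Fin n, (i : ℕ) < k → (π i : ℕ) < k

lemma apply_congr {n : ℕ} (τ : Equiv.Perm (Fin n)) {a b : ℕ} (h : a = b)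
    (ha : a < n) (hb : b < n) : (τ ⟨a, ha⟩ : ℕ) = (τ ⟨b, hb⟩ : ℕ) := by
  subst h; rfl

lemma permList_length {n : ℕ} (π : Equiv.Perm (Fin n)) : (permList π).length = n := by
  simp [permList]

lemma permList_getElem {n : ℕ} (π : Equiv.Perm (Fin n)) (i : ℕ)
    (h : i < (permList π).length) :
    (permList π)[i] = (π ⟨i, by simpa [permList] using h⟩ : ℕ) := by
  simp [permList]

lemma permList_get' {n : ℕ} (π : Equiv.Perm (Fin n)) (j : Fin (permList π).length) :
    (permList π).get j = (π ⟨j.val, by have := j.isLt; simpa [permList] using this⟩ : ℕ) := by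
  obtain ⟨i, h⟩ := j
  simp [permList]

set_option maxHeartbeats 1600000 in
theorem stmt6 (n : ℕ) (hn : 2 < n) (τ : Equiv.Perm (Fin n)) :
    (IsFishburn τ ∧ AvoidsPat τ [2, 1, 3] ∧
        (τ ⟨n - 1, by omega⟩ : ℕ) = n - 1) ↔
      τ = Equiv.refl (Fin n) := by
  have hlen : (permList τ).length = n := permList_length τ
  constructor
  · rintro ⟨-, hAv, hlast⟩
    have hne : ∀ i : ℕ, ∀ hi : i < n, i ≠ n - 1 → (τ ⟨i, hi⟩ : ℕ) < n - 1 := by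
      intro i hi hne
      have h1 : (τ ⟨i, hi⟩ : ℕ) ≤ n - 1 := by
        have := (τ ⟨i, hi⟩).isLt; omega
      rcases lt_or_eq_of_le h1 with h | h
      · exact h
      · exfalso
        have : τ ⟨i, hi⟩ = τ ⟨n - 1, by omega⟩ := by
          apply Fin.ext; simp [h, hlast]
        have := τ.injective this
        simp [Fin.ext_iff] at this
        omega
    have hadj : ∀ i : ℕ, ∀ h : i + 1 < n, (τ ⟨i, by omega⟩ : ℕ) < (τ ⟨i + 1, h⟩ : ℕ) := by
      intro i h
      by_cases hend : i + 1 = n - 1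
      · have he : (τ ⟨i + 1, h⟩ : ℕ) = n - 1 := by
          rw [apply_congr τ hend h (by omega), hlast]
        have := hne i (by omega) (by omega)
        omega
      · by_contra hle
        push_neg at hle
        have hneq : (τ ⟨i + 1, h⟩ : ℕ) ≠ (τ ⟨i, by omega⟩ : ℕ) := by
          intro hq
          have : (⟨i + 1, h⟩ : Fin n) = ⟨i, by omega⟩ := τ.injective (Fin.ext hq)
          simp [Fin.ext_iff] at this
        have hlt : (τ ⟨i + 1, h⟩ : ℕ) < (τ ⟨i, by omega⟩ : ℕ) := by omega
        have h1 : (τ ⟨i, by omega⟩ : ℕ) < n - 1 := hne i (by omega) (by omega)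
        have h2 : (τ ⟨i + 1, h⟩ : ℕ) < n - 1 := hne (i + 1) h hend
        have hi1 : i + 1 < n - 1 := by omega
        apply hAv
        refine ⟨fun j => if j.val = 0 then ⟨i, by omega⟩ else
            if j.val = 1 then ⟨i + 1, by omega⟩ else ⟨n - 1, by omega⟩, ?_, ?_⟩
        · rintro ⟨av, ha⟩ ⟨bv, hb⟩ hab
          simp only [List.length_cons, List.length_nil] at ha hb
          simp only [Fin.lt_def] at hab ⊢
          interval_cases av <;> interval_cases bv <;> simp <;> omega
        · rintro ⟨av, ha⟩ ⟨bv, hb⟩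
          simp only [List.length_cons, List.length_nil] at ha hb
          interval_cases av <;> interval_cases bv <;>
            simp [permList_getElem, hlast] <;> omega
    have hlb : ∀ i : ℕ, ∀ hi : i < n, i ≤ (τ ⟨i, hi⟩ : ℕ) := by
      intro i
      induction i with
      | zero => intro _; omega
      | succ j ih =>
        intro hi
        have := ih (by omega)
        have := hadj j hi
        omega
    have hub : ∀ d : ℕ, ∀ hi : n - 1 - d < n, (τ ⟨n - 1 - d, hi⟩ : ℕ) ≤ n - 1 - d := by
      intro d
      induction d with
      | zero =>
        intro hi
        have := apply_congr τ (show n - 1 - 0 = n - 1 by omega) hi (by omega)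
        omega
      | succ j ih =>
        intro hi
        by_cases hd : n - 1 - j = 0
        · have heq : n - 1 - (j + 1) = n - 1 - j := by omega
          have h2 := ih (by omega)
          have := apply_congr τ heq hi (by omega)
          omega
        · have heq : n - 1 - (j + 1) + 1 = n - 1 - j := by omega
          have h2 := ih (by omega)
          have h3 := hadj (n - 1 - (j + 1)) (by omega)
          have := apply_congr τ heq (by omega) (by omega)
          omega
    ext x
    have h1 := hlb x.val x.isLt
    have h2 := hub (n - 1 - x.val) (by omega)
    have hx : n - 1 - (n - 1 - x.val) = x.val := by omega
    have he := apply_congr τ hx (by omega) x.isLt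
    simp only [Fin.eta] at h1 h2 he
    simp only [Equiv.refl_apply]
    omega
  · rintro rfl
    refine ⟨?_, ?_, by simp⟩
    · intro i k hi hk hik heq _
      simp at heq
      omega
    · rintro ⟨f, hf, hiff⟩
      have h01 : (f ⟨0, by norm_num⟩ : ℕ) < (f ⟨1, by norm_num⟩ : ℕ) :=
        hf (show (⟨0, by norm_num⟩ : Fin _) < ⟨1, by norm_num⟩ by simp [Fin.lt_def])
      have h2 := (hiff ⟨1, by norm_num⟩ ⟨0, by norm_num⟩).mp (by norm_num)
      rw [permList_get', permList_get'] at h2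
      simp at h2 h01
      omega
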